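/- arXiv:0705.2460 — 2 statements merged into one kernel-verified Lean document; each statement's English description precedes it below -/
import Mathlib

section
/- Biorthogonality relation: with φ_n(t,x) = (1/√2) t^{-(n+1)/2} e^{-x²/(4t)} φ_n(x/√(2t)) and φ̂_n(t,x) = t^{n/2} e^{x²/(4t)} φ_n(x/√(2t)), for 0 < t₁ < t₂, ∫_ℝ ∫_ℝ φ̂_n(t₂, x₂) p(t₂-t₁, x₂|x₁) φ_{n'}(t₁, x₁) dx₁ dx₂ = δ_{n,n'} for all nonnegative integers n, n'. -/
open MeasureTheory Real

/-- The one-dimensional heat kernel `p(t, y | x)`. -/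
noncomputable def heatKernel (t y x : ℝ) : ℝ :=
  (Real.sqrt (2 * π * t))⁻¹ * Real.exp (-(y - x) ^ 2 / (2 * t))

/-- Hermite polynomials by the Rodrigues formula. -/
noncomputable def hermiteH (n : ℕ) (x : ℝ) : ℝ :=
  (-1 : ℝ) ^ n * Real.exp (x ^ 2) * iteratedDeriv n (fun y => Real.exp (-(y ^ 2))) x

/-- Hermite orthonormal functions `φ_n`. -/
noncomputable def hermiteFun (n : ℕ) (x : ℝ) : ℝ :=
  (Real.sqrt (Real.sqrt π * 2 ^ n * n.factorial))⁻¹ * Real.exp (-(x ^ 2) / 2) * hermiteH n x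

/-- The space-time functions `φ_n(t,x)`. -/
noncomputable def phiT (n : ℕ) (t x : ℝ) : ℝ :=
  (Real.sqrt 2)⁻¹ * t ^ (-(((n : ℝ) + 1) / 2)) * Real.exp (-(x ^ 2) / (4 * t)) *
    hermiteFun n (x / Real.sqrt (2 * t))

/-- The dual space-time functions `φ̂_n(t,x)`. -/
noncomputable def phiHat (n : ℕ) (t x : ℝ) : ℝ :=
  t ^ ((n : ℝ) / 2) * Real.exp (x ^ 2 / (4 * t)) * hermiteFun n (x / Real.sqrt (2 * t))

/-!
With `H_n` the physicists' Hermite polynomials, `φ_n(t,x)` is a constant times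
`t^{-(n+1)/2} H_n(x/√(2t)) e^{-x²/(2t)}`. Completing the square turns the inner integral into
`∫ H_n(ax) e^{-b(x-μ)²} dx = √(π/b) c^n H_n(aμ/c)` with `c² = 1 - a²/b`, which follows by induction
from the three-term recurrence, the first moment `∫ x H_{n+1}(ax) e^{-b(x-μ)²} dx` coming from one
integration by parts. Hence the heat kernel carries `φ_n(t₁,·)` to `φ_n(t₂,·)`. In
`∫ φ̂_n(t,x) φ_{n'}(t,x) dx` the exponentials cancel and the substitution `x = √(2t) y` leaves the
orthonormality of the Hermite functions, again an integration by parts against `e^{-x²}`.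
-/

open Polynomial

noncomputable def physHermite : ℕ → ℝ[X]
  | 0 => 1
  | n + 1 => C 2 * X * physHermite n - derivative (physHermite n)

@[simp]
theorem physHermite_zero : physHermite 0 = 1 := rfl

theorem physHermite_succ (n : ℕ) :
    physHermite (n + 1) = C 2 * X * physHermite n - derivative (physHermite n) := rfl

@[simp]
theorem physHermite_one : physHermite 1 = C 2 * X := by simp [physHermite_succ]

theorem derivative_physHermite_succ (n : ℕ) :
    derivative (physHermite (n + 1)) = C (2 * (n + 1) : ℝ) * physHermite n := by
  induction n with
  | zero => simp
  | succ k ih =>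
    calc derivative (physHermite (k + 2))
        = C 2 * physHermite (k + 1) + C (2 * (k + 1) : ℝ) * physHermite (k + 1) := by
          rw [physHermite_succ (k + 1), derivative_sub, derivative_mul, ih, derivative_C_mul,
            physHermite_succ k]
          simp only [derivative_mul, derivative_C, derivative_X]
          ring
      _ = C (2 * ((k + 1 : ℕ) + 1) : ℝ) * physHermite (k + 1) := by
          rw [← add_mul, ← C_add]
          push_cast
          ring_nf

theorem physHermite_add_two (n : ℕ) :
    physHermite (n + 2) =
      C 2 * X * physHermite (n + 1) - C (2 * (n + 1) : ℝ) * physHermite n := by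
  rw [physHermite_succ (n + 1), derivative_physHermite_succ]

theorem iteratedDeriv_exp_neg_sq (n : ℕ) (x : ℝ) :
    iteratedDeriv n (fun y => exp (-(y ^ 2))) x =
      (-1) ^ n * (physHermite n).eval x * exp (-(x ^ 2)) := by
  induction n generalizing x with
  | zero => simp
  | succ n ih =>
    rw [iteratedDeriv_succ, funext ih]
    have hd : HasDerivAt (fun y => (-1) ^ n * (physHermite n).eval y * exp (-(y ^ 2)))
        ((-1) ^ n * ((physHermite n).derivative.eval x * exp (-(x ^ 2))
          + (physHermite n).eval x * (exp (-(x ^ 2)) * -(2 * x)))) x := by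
      simpa [mul_assoc] using (((physHermite n).hasDerivAt x).mul
        ((hasDerivAt_pow 2 x).neg.exp)).const_mul ((-1 : ℝ) ^ n)
    rw [hd.deriv, physHermite_succ]
    simp only [eval_sub, eval_mul, eval_C, eval_X]
    ring

theorem hermiteH_eq_eval_physHermite (n : ℕ) (x : ℝ) :
    hermiteH n x = (physHermite n).eval x := by
  rw [hermiteH, iteratedDeriv_exp_neg_sq]
  have hexp : exp (x ^ 2) * exp (-(x ^ 2)) = 1 := by rw [← exp_add, add_neg_cancel, exp_zero]
  have hsign : ((-1 : ℝ) ^ n) ^ 2 = 1 := by rw [← pow_mul, pow_mul']; simp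
  linear_combination
    ((physHermite n).eval x * ((-1) ^ n) ^ 2) * hexp + (physHermite n).eval x * hsign

section GaussianPairing

variable {b : ℝ} (hb : 0 < b) (μ : ℝ)

include hb in
theorem integrable_eval_mul_exp_neg_mul_sq_sub (p : ℝ[X]) :
    Integrable (fun x => p.eval x * exp (-b * (x - μ) ^ 2)) := by
  have centered (q : ℝ[X]) : Integrable (fun x => q.eval x * exp (-b * x ^ 2)) := by
    induction q using Polynomial.induction_on' with
    | add f g hf hg => simpa only [eval_add, add_mul, Pi.add_def] using hf.add hg
    | monomial k c =>
      have hk : (-1 : ℝ) < k := by linarith [k.cast_nonneg (α := ℝ)]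
      simpa [mul_assoc, rpow_natCast] using
        (integrable_rpow_mul_exp_neg_mul_sq hb hk).const_mul c
  refine ((centered (p.comp (X + C μ))).comp_sub_right μ).congr (ae_of_all _ fun x => ?_)
  simp [eval_comp]

noncomputable def gaussianPairing : ℝ[X] →ₗ[ℝ] ℝ where
  toFun p := ∫ x, p.eval x * exp (-b * (x - μ) ^ 2)
  map_add' p q := by
    simp only [eval_add, add_mul]
    exact integral_add (integrable_eval_mul_exp_neg_mul_sq_sub hb μ p)
      (integrable_eval_mul_exp_neg_mul_sq_sub hb μ q)
  map_smul' c p := by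
    simp only [eval_smul, smul_eq_mul, mul_assoc, integral_const_mul, RingHom.id_apply]

theorem gaussianPairing_apply (p : ℝ[X]) :
    gaussianPairing hb μ p = ∫ x, p.eval x * exp (-b * (x - μ) ^ 2) := rfl

theorem gaussianPairing_C_mul (r : ℝ) (p : ℝ[X]) :
    gaussianPairing hb μ (C r * p) = r * gaussianPairing hb μ p := by
  rw [← smul_eq_C_mul, map_smul, smul_eq_mul]

theorem gaussianPairing_one : gaussianPairing hb μ 1 = √(π / b) := by
  rw [gaussianPairing_apply]
  simp only [eval_one, one_mul]
  exact (integral_sub_right_eq_self (fun x => exp (-b * x ^ 2)) μ).trans (integral_gaussian b)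

theorem gaussianPairing_derivative (p : ℝ[X]) :
    gaussianPairing hb μ (derivative p) = gaussianPairing hb μ (C (2 * b) * (X - C μ) * p) := by
  have hgauss (x : ℝ) : HasDerivAt (fun y => exp (-b * (y - μ) ^ 2))
      (-(2 * b * (x - μ)) * exp (-b * (x - μ) ^ 2)) x := by
    convert ((((hasDerivAt_id' x).sub_const μ).fun_pow 2).const_mul (-b)).exp using 1
    push_cast
    ring
  have hint := integrable_eval_mul_exp_neg_mul_sq_sub hb μ
  have parts := integral_mul_deriv_eq_deriv_mul_of_integrable (fun x _ => p.hasDerivAt x)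
    (fun x _ => hgauss x)
    ((hint (-(C (2 * b) * (X - C μ) * p))).congr (ae_of_all _ fun x => by simp; ring))
    (hint (derivative p)) (hint p)
  rw [gaussianPairing_apply, gaussianPairing_apply, ← neg_eq_iff_eq_neg.mpr parts,
    ← integral_neg]
  congr 1 with x
  simp
  ring

theorem gaussianPairing_X : gaussianPairing hb μ X = μ * √(π / b) := by
  have h := gaussianPairing_derivative hb μ 1
  have hC : gaussianPairing hb μ (C μ) = μ * √(π / b) := by
    rw [← mul_one (C μ), gaussianPairing_C_mul, gaussianPairing_one]
  rw [derivative_one, map_zero, mul_one, gaussianPairing_C_mul, map_sub, hC] at h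
  linarith [(mul_eq_zero.mp h.symm).resolve_left (by positivity)]

theorem gaussianPairing_physHermite_comp (a : ℝ) {c : ℝ} (hc0 : c ≠ 0)
    (hc : c ^ 2 = 1 - a ^ 2 / b) (n : ℕ) :
    gaussianPairing hb μ ((physHermite n).comp (C a * X)) =
      √(π / b) * c ^ n * (physHermite n).eval (a * μ / c) := by
  induction n using Nat.twoStepInduction with
  | zero => simp [gaussianPairing_one]
  | one =>
    simp only [physHermite_one, mul_comp, C_comp, X_comp, gaussianPairing_C_mul, gaussianPairing_X,
      eval_mul, eval_C, eval_X]
    field_simp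
  | more k h0 h1 =>
    set q₀ := (physHermite k).comp (C a * X)
    set q₁ := (physHermite (k + 1)).comp (C a * X)
    have hrec : (physHermite (k + 2)).comp (C a * X) =
        C (2 * a) * (X * q₁) - C (2 * (k + 1) : ℝ) * q₀ := by
      simp only [q₀, q₁, physHermite_add_two, sub_comp, mul_comp, C_comp, X_comp, C_mul]
      ring
    have hderiv : derivative q₁ = C (a * (2 * (k + 1))) * q₀ := by
      simp only [q₀, q₁, derivative_comp, derivative_physHermite_succ, mul_comp, C_comp,
        derivative_mul, derivative_C, derivative_X, C_mul]
      ring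
    have hfirstMoment : gaussianPairing hb μ (X * q₁) =
        μ * gaussianPairing hb μ q₁ + a * (k + 1) / b * gaussianPairing hb μ q₀ := by
      have parts := gaussianPairing_derivative hb μ q₁
      rw [hderiv, show C (2 * b) * (X - C μ) * q₁ =
          C (2 * b) * (X * q₁) - C (2 * b * μ) * q₁ by simp only [C_mul]; ring,
        map_sub, gaussianPairing_C_mul, gaussianPairing_C_mul, gaussianPairing_C_mul] at parts
      field_simp
      linear_combination -parts / 2
    rw [hrec, map_sub, gaussianPairing_C_mul, gaussianPairing_C_mul, hfirstMoment, h0, h1,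
      physHermite_add_two]
    simp only [eval_sub, eval_mul, eval_C, eval_X]
    have hz : c * (a * μ / c) = a * μ := mul_div_cancel₀ _ hc0
    linear_combination (2 * (k + 1) * √(π / b) * c ^ k * (physHermite k).eval (a * μ / c)) * hc
      - (2 * √(π / b) * c ^ (k + 1) * (physHermite (k + 1)).eval (a * μ / c)) * hz

end GaussianPairing

theorem gaussianPairing_physHermite_mul_succ (n m : ℕ) :
    gaussianPairing one_pos 0 (physHermite n * physHermite (m + 1)) =
      gaussianPairing one_pos 0 (derivative (physHermite n) * physHermite m) := by
  have parts := gaussianPairing_derivative one_pos 0 (physHermite n * physHermite m)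
  have hsucc : physHermite n * physHermite (m + 1) =
      C (2 * 1) * (X - C 0) * (physHermite n * physHermite m) -
        physHermite n * derivative (physHermite m) := by
    rw [physHermite_succ]
    simp only [mul_one, map_zero, sub_zero]
    ring
  rw [hsucc, map_sub, ← parts, derivative_mul, map_add, add_sub_cancel_right]

theorem gaussianPairing_physHermite_mul_physHermite (n m : ℕ) :
    gaussianPairing one_pos 0 (physHermite n * physHermite m) =
      if n = m then √π * 2 ^ n * n.factorial else 0 := by
  induction n generalizing m with
  | zero =>
    cases m with
    | zero => simp [gaussianPairing_one]
    | succ j => rw [gaussianPairing_physHermite_mul_succ]; simp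
  | succ i ih =>
    cases m with
    | zero => rw [mul_comm, gaussianPairing_physHermite_mul_succ]; simp
    | succ j =>
      rw [gaussianPairing_physHermite_mul_succ, derivative_physHermite_succ, mul_assoc,
        gaussianPairing_C_mul, ih]
      by_cases hij : i = j
      · subst hij
        simp only [if_true, Nat.factorial_succ, pow_succ, Nat.cast_mul, Nat.cast_succ]
        ring
      · simp [hij]

theorem hermiteFun_eq_eval_physHermite (n : ℕ) (x : ℝ) :
    hermiteFun n x =
      (√(√π * 2 ^ n * n.factorial))⁻¹ * ((physHermite n).eval x * exp (-(x ^ 2) / 2)) := by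
  rw [hermiteFun, hermiteH_eq_eval_physHermite]
  ring

theorem integral_hermiteFun_mul_hermiteFun (n m : ℕ) :
    ∫ x, hermiteFun n x * hermiteFun m x = if n = m then 1 else 0 := by
  have hpt (x : ℝ) : hermiteFun n x * hermiteFun m x =
      (√(√π * 2 ^ n * n.factorial))⁻¹ * (√(√π * 2 ^ m * m.factorial))⁻¹ *
        ((physHermite n * physHermite m).eval x * exp (-1 * (x - 0) ^ 2)) := by
    have hweight : exp (-(x ^ 2) / 2) * exp (-(x ^ 2) / 2) = exp (-1 * (x - 0) ^ 2) := by
      rw [← exp_add]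
      ring_nf
    rw [hermiteFun_eq_eval_physHermite, hermiteFun_eq_eval_physHermite, eval_mul, ← hweight]
    ring
  simp_rw [hpt]
  rw [integral_const_mul, ← gaussianPairing_apply one_pos,
    gaussianPairing_physHermite_mul_physHermite]
  split_ifs with h
  · subst h
    have hpos : 0 < √π * 2 ^ n * n.factorial := by positivity
    rw [← mul_inv, mul_self_sqrt hpos.le, inv_mul_cancel₀ hpos.ne']
  · rw [mul_zero]

theorem rpow_neg_add_one_div_two {t : ℝ} (ht : 0 ≤ t) (n : ℕ) :
    t ^ (-(((n : ℝ) + 1) / 2)) = (√t ^ (n + 1))⁻¹ := by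
  rw [← neg_div, rpow_div_two_eq_sqrt _ ht, rpow_neg (sqrt_nonneg t), ← Nat.cast_add_one,
    rpow_natCast]

theorem phiT_eq_eval_physHermite (n : ℕ) {t : ℝ} (ht : 0 < t) (x : ℝ) :
    phiT n t x =
      (√2)⁻¹ * t ^ (-(((n : ℝ) + 1) / 2)) * (√(√π * 2 ^ n * n.factorial))⁻¹ *
        ((physHermite n).eval (x / √(2 * t)) * exp (-x ^ 2 / (2 * t))) := by
  have hweight :
      exp (-x ^ 2 / (4 * t)) * exp (-(x / √(2 * t)) ^ 2 / 2) = exp (-x ^ 2 / (2 * t)) := by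
    rw [← exp_add, div_pow, sq_sqrt (by positivity)]
    congr 1
    field_simp
    ring
  rw [phiT, hermiteFun_eq_eval_physHermite, ← hweight]
  ring

theorem heatKernel_mul_exp_neg_sq_div {s t : ℝ} (hs : 0 < s) (ht : 0 < t) (x y : ℝ) :
    heatKernel s y x * exp (-x ^ 2 / (2 * t)) =
      (√(2 * π * s))⁻¹ * exp (-y ^ 2 / (2 * (t + s))) *
        exp (-((t + s) / (2 * s * t)) * (x - t * y / (t + s)) ^ 2) := by
  simp only [heatKernel, mul_assoc, ← exp_add]
  congr 2
  field_simp
  ring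

theorem integral_heatKernel_mul_phiT (n : ℕ) {s t : ℝ} (hs : 0 < s) (ht : 0 < t) (y : ℝ) :
    ∫ x, heatKernel s y x * phiT n t x = phiT n (t + s) y := by
  set b := (t + s) / (2 * s * t)
  set a := (√(2 * t))⁻¹
  set c := √t / √(t + s)
  have hb : 0 < b := by positivity
  have hc0 : c ≠ 0 := by positivity
  have hc : c ^ 2 = 1 - a ^ 2 / b := by
    rw [div_pow, sq_sqrt ht.le, sq_sqrt (by positivity), inv_pow, sq_sqrt (by positivity)]
    simp only [b]
    field_simp
    ring
  have hpt (x : ℝ) : heatKernel s y x * phiT n t x =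
      (√2)⁻¹ * t ^ (-(((n : ℝ) + 1) / 2)) * (√(√π * 2 ^ n * n.factorial))⁻¹ *
        (√(2 * π * s))⁻¹ * exp (-y ^ 2 / (2 * (t + s))) *
          (((physHermite n).comp (C a * X)).eval x * exp (-b * (x - t * y / (t + s)) ^ 2)) := by
    simp only [a, b, phiT_eq_eval_physHermite n ht, eval_comp, eval_mul, eval_C, eval_X,
      div_eq_inv_mul x]
    linear_combination ((√2)⁻¹ * t ^ (-(((n : ℝ) + 1) / 2)) *
      (√(√π * 2 ^ n * n.factorial))⁻¹ * (physHermite n).eval ((√(2 * t))⁻¹ * x)) *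
        heatKernel_mul_exp_neg_sq_div hs ht x y
  have hσ : √t ^ 2 = t := sq_sqrt ht.le
  have hρ : √(t + s) ^ 2 = t + s := sq_sqrt (by positivity)
  have hσ0 : √t ≠ 0 := by positivity
  have hρ0 : √(t + s) ≠ 0 := by positivity
  have harg : a * (t * y / (t + s)) / c = y / √(2 * (t + s)) := by
    simp only [a, c]
    rw [sqrt_mul zero_le_two, sqrt_mul zero_le_two]
    field_simp
    rw [hσ, hρ]
  have hconst : t ^ (-(((n : ℝ) + 1) / 2)) * (√(2 * π * s))⁻¹ * (√(π / b) * c ^ n) =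
      (t + s) ^ (-(((n : ℝ) + 1) / 2)) := by
    have hπb : π / b = 2 * π * s * (t / (t + s)) := by
      simp only [b]
      field_simp
    rw [rpow_neg_add_one_div_two ht.le, rpow_neg_add_one_div_two (by positivity), hπb,
      sqrt_mul (show 0 ≤ 2 * π * s by positivity), sqrt_div ht.le]
    simp only [c]
    field_simp
    rw [div_pow]
    field_simp
    ring
  simp_rw [hpt]
  rw [integral_const_mul, ← gaussianPairing_apply hb,
    gaussianPairing_physHermite_comp hb _ a hc0 hc, harg,
    phiT_eq_eval_physHermite n (by positivity), ← hconst]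
  ring

theorem integral_phiHat_mul_phiT (n m : ℕ) {t : ℝ} (ht : 0 < t) :
    ∫ x, phiHat n t x * phiT m t x = if n = m then 1 else 0 := by
  have hpt (x : ℝ) : phiHat n t x * phiT m t x =
      (√2)⁻¹ * t ^ ((n : ℝ) / 2) * t ^ (-(((m : ℝ) + 1) / 2)) *
        (hermiteFun n (x / √(2 * t)) * hermiteFun m (x / √(2 * t))) := by
    have hcancel : exp (x ^ 2 / (4 * t)) * exp (-x ^ 2 / (4 * t)) = 1 := by
      rw [← exp_add, neg_div, add_neg_cancel, exp_zero]
    rw [phiHat, phiT]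
    linear_combination ((√2)⁻¹ * t ^ ((n : ℝ) / 2) * t ^ (-(((m : ℝ) + 1) / 2)) *
      hermiteFun n (x / √(2 * t)) * hermiteFun m (x / √(2 * t))) * hcancel
  simp_rw [hpt]
  rw [integral_const_mul, Measure.integral_comp_div (fun y => hermiteFun n y * hermiteFun m y),
    integral_hermiteFun_mul_hermiteFun, abs_of_pos (by positivity), smul_eq_mul]
  split_ifs with h
  · subst h
    rw [rpow_div_two_eq_sqrt _ ht.le, rpow_natCast, rpow_neg_add_one_div_two ht.le,
      sqrt_mul zero_le_two]
    have hσ0 : √t ≠ 0 := by positivity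
    field_simp
    ring
  · rw [mul_zero, mul_zero]

/-- Biorthogonality of `φ̂_n` and `φ_{n'}` with respect to the heat kernel. -/
theorem phi_biorthogonality (n n' : ℕ) (t₁ t₂ : ℝ) (h₁ : 0 < t₁) (h₂ : t₁ < t₂) :
    (∫ x₂ : ℝ, ∫ x₁ : ℝ,
        phiHat n t₂ x₂ * heatKernel (t₂ - t₁) x₂ x₁ * phiT n' t₁ x₁) =
      if n = n' then 1 else 0 := by
  have hinner (x₂ : ℝ) :
      ∫ x₁, phiHat n t₂ x₂ * heatKernel (t₂ - t₁) x₂ x₁ * phiT n' t₁ x₁ =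
        phiHat n t₂ x₂ * phiT n' t₂ x₂ := by
    simp_rw [mul_assoc]
    rw [integral_const_mul, integral_heatKernel_mul_phiT n' (sub_pos.mpr h₂) h₁, add_sub_cancel]
  simp_rw [hinner]
  exact integral_phiHat_mul_phiT n n' (h₁.trans h₂)
end

section
/- Selberg-type Gaussian integral with Vandermonde squared: for t > 0, ∫_{W_N} e^{-|x|²/(2t)} (h_N(x))² dx = C_N t^{N²/2}, where W_N = {x ∈ ℝ^N : x_1 < x_2 < ... < x_N}, h_N(x) = ∏_{j<k}(x_k - x_j), and C_N = (2π)^{N/2} ∏_{j=1}^N Γ(j). -/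
/-!
Write `h_N(x) = det [He_i(x_j)]` with the monic probabilists' Hermite polynomials `He_i`.
Andréief's identity turns the integral of `e^{-|x|²/2} h_N(x)²` over all of `ℝ^N` into
`N!` times the Gram determinant of `He_0, …, He_{N-1}` for the weight `e^{-x²/2}`; by
orthogonality (integration by parts, `He_{n+1} e^{-x²/2} = -(He_n e^{-x²/2})'`) that Gram matrix
is diagonal with entries `√(2π) k!`. The integrand is symmetric and the chambers
`{x | x ∘ σ strictly increasing}` tile `ℝ^N` up to a null set, so the integral over `W_N` is
`1/N!` of the full one. Finally, `x = √t y` contributes `t^{N/2}` from the Jacobian and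
`t^{N(N-1)/2}` from the homogeneity of `h_N²`.
-/

open MeasureTheory Real

/-- The Vandermonde product `h_N(x) = ∏_{j<k}(x_k - x_j)`. -/
noncomputable def vandermonde (N : ℕ) (x : Fin N → ℝ) : ℝ :=
  ∏ j : Fin N, ∏ k ∈ Finset.Ioi j, (x k - x j)

open Matrix Polynomial
open scoped Nat Pointwise

theorem Nat.add_two_mul_choose_two (n : ℕ) : n + 2 * n.choose 2 = n ^ 2 := by
  induction n with
  | zero => rfl
  | succ n ih =>
    rw [Nat.choose_succ_succ, Nat.choose_one_right]
    nlinarith [ih]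

theorem Fin.sum_univ_val_eq_choose_two (n : ℕ) : ∑ i : Fin n, (i : ℕ) = n.choose 2 := by
  rw [Fin.sum_univ_eq_sum_range (fun i => i), Finset.sum_range_id, Nat.choose_two_right]

theorem Real.sqrt_pow_eq_rpow_div_two {x : ℝ} (hx : 0 ≤ x) (n : ℕ) :
    √x ^ n = x ^ ((n : ℝ) / 2) := by
  rw [rpow_div_two_eq_sqrt _ hx, rpow_natCast]

namespace Polynomial

theorem integrable_eval_mul_exp_neg_mul_sq {b : ℝ} (hb : 0 < b) (p : ℝ[X]) :
    Integrable fun x => p.eval x * exp (-b * x ^ 2) := by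
  simp_rw [eval_eq_sum_range, Finset.sum_mul]
  refine integrable_finsetSum _ fun i _ => ?_
  have hi := integrable_rpow_mul_exp_neg_mul_sq hb (neg_one_lt_zero.trans_le i.cast_nonneg)
  simpa [mul_assoc] using hi.const_mul (p.coeff i)

theorem derivative_hermite_succ (n : ℕ) :
    derivative (hermite (n + 1)) = (n + 1 : ℤ[X]) * hermite n := by
  induction n with
  | zero => simp [hermite_zero]
  | succ n ih =>
    rw [hermite_succ, derivative_sub, derivative_mul, derivative_X, ih, derivative_mul,
      hermite_succ n]
    simp only [derivative_add, derivative_natCast, derivative_one]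
    push_cast
    ring

end Polynomial

theorem hasDerivAt_gaussian_mul_aeval_hermite (n : ℕ) (x : ℝ) :
    HasDerivAt (fun y => exp (-(y ^ 2 / 2)) * aeval y (hermite n))
      (-(exp (-(x ^ 2 / 2)) * aeval x (hermite (n + 1)))) x := by
  have hw : HasDerivAt (fun y : ℝ => exp (-(y ^ 2 / 2))) (-x * exp (-(x ^ 2 / 2))) x := by
    simpa [mul_comm] using (((hasDerivAt_pow 2 x).div_const 2).neg).exp
  refine (hw.mul ((hermite n).hasDerivAt_aeval x)).congr_deriv ?_
  rw [hermite_succ, map_sub, map_mul, aeval_X]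
  ring

theorem integrable_aeval_mul_gaussian_mul_aeval (p q : ℤ[X]) :
    Integrable fun x : ℝ => aeval x p * (exp (-(x ^ 2 / 2)) * aeval x q) := by
  convert integrable_eval_mul_exp_neg_mul_sq (b := 1 / 2) (by norm_num)
    ((p * q).map (algebraMap ℤ ℝ)) using 2 with x
  rw [eval_map_algebraMap, map_mul]
  ring_nf

theorem integral_hermite_succ_mul_gaussian_mul_hermite_succ (m n : ℕ) :
    ∫ x, aeval x (hermite (m + 1)) * (exp (-(x ^ 2 / 2)) * aeval x (hermite (n + 1))) =
      (m + 1) * ∫ x, aeval x (hermite m) * (exp (-(x ^ 2 / 2)) * aeval x (hermite n)) := by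
  have hderiv (x : ℝ) : HasDerivAt
      (fun y => aeval y (hermite (m + 1)) * (exp (-(y ^ 2 / 2)) * aeval y (hermite n)))
      ((m + 1) * (aeval x (hermite m) * (exp (-(x ^ 2 / 2)) * aeval x (hermite n))) -
        aeval x (hermite (m + 1)) * (exp (-(x ^ 2 / 2)) * aeval x (hermite (n + 1)))) x := by
    refine (((hermite (m + 1)).hasDerivAt_aeval x).mul
      (hasDerivAt_gaussian_mul_aeval_hermite n x)).congr_deriv ?_
    rw [derivative_hermite_succ]
    simp only [map_mul, map_add, map_natCast, map_one]
    ring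
  have h1 := (integrable_aeval_mul_gaussian_mul_aeval (hermite m) (hermite n)).const_mul
    (m + 1 : ℝ)
  have h2 := integrable_aeval_mul_gaussian_mul_aeval (hermite (m + 1)) (hermite (n + 1))
  have hzero := integral_eq_zero_of_hasDerivAt_of_integrable hderiv (h1.sub h2)
    (integrable_aeval_mul_gaussian_mul_aeval _ _)
  rw [integral_sub h1 h2, integral_const_mul] at hzero
  linarith

theorem integral_hermite_zero_mul_gaussian_mul_hermite_succ (n : ℕ) :
    ∫ x, aeval x (hermite 0) * (exp (-(x ^ 2 / 2)) * aeval x (hermite (n + 1))) = 0 := by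
  have hint (p : ℤ[X]) : Integrable fun x : ℝ => exp (-(x ^ 2 / 2)) * aeval x p := by
    simpa using integrable_aeval_mul_gaussian_mul_aeval 1 p
  have := integral_eq_zero_of_hasDerivAt_of_integrable
    (hasDerivAt_gaussian_mul_aeval_hermite n) (hint _).neg (hint _)
  simpa only [hermite_zero, C_1, map_one, one_mul, integral_neg, neg_eq_zero] using this

theorem integral_hermite_mul_gaussian_mul_hermite (m n : ℕ) :
    ∫ x, aeval x (hermite m) * (exp (-(x ^ 2 / 2)) * aeval x (hermite n)) =
      if m = n then √(2 * π) * m ! else 0 := by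
  induction n generalizing m with
  | zero =>
    cases m with
    | zero =>
      simp only [hermite_zero, map_one, one_mul, mul_one, if_true, Nat.factorial_zero,
        Nat.cast_one]
      rw [show 2 * π = π / (1 / 2) by ring, ← integral_gaussian]
      congr with x
      ring_nf
    | succ m =>
      rw [if_neg m.succ_ne_zero, ← integral_hermite_zero_mul_gaussian_mul_hermite_succ m]
      congr 1 with x
      ring
  | succ n ih =>
    cases m with
    | zero =>
      rw [integral_hermite_zero_mul_gaussian_mul_hermite_succ, if_neg n.succ_ne_zero.symm]
    | succ m =>
      rw [integral_hermite_succ_mul_gaussian_mul_hermite_succ, ih]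
      split_ifs <;> simp_all [Nat.factorial_succ]; ring

section Andreief

variable {ι : Type*} [Fintype ι] [DecidableEq ι]

theorem Matrix.det_mul_det_eq_sum_sum {R : Type*} [CommRing R] (A B : Matrix ι ι R) :
    A.det * B.det = ∑ σ : Equiv.Perm ι, ∑ τ : Equiv.Perm ι,
      ((Equiv.Perm.sign σ : ℤ) : R) * (Equiv.Perm.sign τ : ℤ) * ∏ i, A (σ i) i * B (τ i) i := by
  simp_rw [det_apply', Finset.sum_mul_sum, Finset.prod_mul_distrib]
  exact Finset.sum_congr rfl fun σ _ => Finset.sum_congr rfl fun τ _ => by ring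

variable {α 𝕜 : Type*} [MeasurableSpace α] [RCLike 𝕜]

theorem integrable_det_mul_det {μ : Measure α} [SigmaFinite μ] {f g : ι → α → 𝕜}
    (hfg : ∀ a b, Integrable (fun y => f a y * g b y) μ) :
    Integrable (fun x : ι → α => (of fun i j => f i (x j)).det * (of fun i j => g i (x j)).det)
      (Measure.pi fun _ => μ) := by
  simp_rw [det_mul_det_eq_sum_sum, of_apply]
  exact integrable_finsetSum _ fun σ _ => integrable_finsetSum _ fun τ _ =>
    (Integrable.fintype_prod fun i => hfg (σ i) (τ i)).const_mul _

/-- Andréief's identity. -/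
theorem integral_det_mul_det {μ : Measure α} [SigmaFinite μ] {f g : ι → α → 𝕜}
    (hfg : ∀ a b, Integrable (fun y => f a y * g b y) μ) :
    ∫ x : ι → α, (of fun i j => f i (x j)).det * (of fun i j => g i (x j)).det
        ∂(Measure.pi fun _ => μ) =
      (Fintype.card ι)! * (of fun a b => ∫ y, f a y * g b y ∂μ).det := by
  set G := of fun a b => ∫ y, f a y * g b y ∂μ
  have hdet_perm : ∀ σ : Equiv.Perm ι, ∑ τ : Equiv.Perm ι,
      ((Equiv.Perm.sign τ : ℤ) : 𝕜) * ∏ i, G (σ i) (τ i) = Equiv.Perm.sign σ * G.det := by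
    intro σ
    rw [← det_permute, ← det_transpose, det_apply']
    rfl
  have hprod (σ τ : Equiv.Perm ι) :
      Integrable (fun x : ι → α => ∏ i, f (σ i) (x i) * g (τ i) (x i)) (Measure.pi fun _ => μ) :=
    Integrable.fintype_prod fun i => hfg (σ i) (τ i)
  simp_rw [det_mul_det_eq_sum_sum, of_apply]
  rw [integral_finsetSum _ fun σ _ => integrable_finsetSum _ fun τ _ => (hprod σ τ).const_mul _]
  have hfubini (σ τ : Equiv.Perm ι) :
      ∫ x : ι → α, ∏ i, f (σ i) (x i) * g (τ i) (x i) ∂(Measure.pi fun _ => μ) =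
        ∏ i, G (σ i) (τ i) :=
    integral_fintype_prod_eq_prod fun i y => f (σ i) y * g (τ i) y
  simp_rw [integral_finsetSum _ fun τ _ => (hprod _ τ).const_mul _, integral_const_mul, hfubini,
    mul_assoc, ← Finset.mul_sum, hdet_perm, ← mul_assoc, ← Int.cast_mul, ← Units.val_mul,
    Int.units_mul_self]
  simp [Fintype.card_perm]

end Andreief

theorem vandermonde_eq_det {N : ℕ} (x : Fin N → ℝ) : vandermonde N x = (Matrix.vandermonde x).det :=
  (det_vandermonde x).symm

theorem det_aeval_hermite {N : ℕ} (x : Fin N → ℝ) :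
    (of fun i j : Fin N => aeval (x j) (hermite i)).det = vandermonde N x := by
  rw [vandermonde_eq_det, det_eval_matrixOfPolynomials_eq_det_vandermonde x
    (fun i => (hermite i).map (algebraMap ℤ ℝ))
    (fun i => by rw [(hermite_monic i).natDegree_map, natDegree_hermite])
    (fun i => (hermite_monic i).map _), ← det_transpose]
  congr with i j
  exact (eval_map_algebraMap _ _).symm

theorem vandermonde_comp_perm {N : ℕ} (x : Fin N → ℝ) (σ : Equiv.Perm (Fin N)) :
    vandermonde N (x ∘ σ) = Equiv.Perm.sign σ * vandermonde N x := by
  rw [vandermonde_eq_det, vandermonde_eq_det, ← det_permute]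
  rfl

theorem vandermonde_smul {N : ℕ} (c : ℝ) (x : Fin N → ℝ) :
    vandermonde N (c • x) = c ^ N.choose 2 * vandermonde N x := by
  have hcol : Matrix.vandermonde (c • x) =
      Matrix.vandermonde x * diagonal fun j : Fin N => c ^ (j : ℕ) := by
    ext i j
    simp [mul_pow, mul_comm]
  rw [vandermonde_eq_det, vandermonde_eq_det, hcol, det_mul, det_diagonal,
    Finset.prod_pow_eq_pow_sum, Fin.sum_univ_val_eq_choose_two, mul_comm]

theorem measurableSet_setOf_strictMono {ι : Type*} [Preorder ι] [Countable ι] :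
    MeasurableSet {x : ι → ℝ | StrictMono x} := by
  simp only [StrictMono, Set.ofPred_forall]
  exact .iInter fun i => .iInter fun j => .iInter fun _ =>
    measurableSet_lt (measurable_pi_apply i) (measurable_pi_apply j)

theorem volume_setOf_not_injective {ι : Type*} [Fintype ι] :
    volume {x : ι → ℝ | ¬ Function.Injective x} = 0 := by
  classical
  have hsub : {x : ι → ℝ | ¬ Function.Injective x} ⊆
      ⋃ p : {p : ι × ι // p.1 ≠ p.2},
        (LinearMap.ker ((LinearMap.proj p.1.1 : (ι → ℝ) →ₗ[ℝ] ℝ) - LinearMap.proj p.1.2) :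
          Set (ι → ℝ)) := by
    intro x hx
    simp only [Function.Injective, not_forall] at hx
    obtain ⟨i, j, hxij, hij⟩ := hx
    exact Set.mem_iUnion.2 ⟨⟨(i, j), hij⟩, by simp [hxij]⟩
  refine measure_mono_null hsub (measure_iUnion_null fun p => Measure.addHaar_submodule _ _ ?_)
  intro htop
  have hmem := htop ▸ Submodule.mem_top (x := Pi.single p.1.1 (1 : ℝ))
  simp [Pi.single_eq_of_ne (Ne.symm p.2)] at hmem

theorem Equiv.Perm.eq_of_strictMono_comp {n : ℕ} {x : Fin n → ℝ} {σ τ : Equiv.Perm (Fin n)}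
    (hσ : StrictMono (x ∘ σ)) (hτ : StrictMono (x ∘ τ)) : σ = τ := by
  have hx : Function.Injective x := (σ.injective_comp x).1 hσ.injective
  exact Equiv.ext fun i => hx (congrFun (Tuple.unique_monotone hσ.monotone hτ.monotone) i)

theorem exists_strictMono_comp_perm {n : ℕ} {x : Fin n → ℝ} (hx : Function.Injective x) :
    ∃ σ : Equiv.Perm (Fin n), StrictMono (x ∘ σ) :=
  ⟨Tuple.sort x, (Tuple.monotone_sort x).strictMono_of_injective (hx.comp (Tuple.sort x).injective)⟩

section Symmetric

variable {E : Type*} [NormedAddCommGroup E] [NormedSpace ℝ E] {n : ℕ} {f : (Fin n → ℝ) → E}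

theorem setIntegral_strictMono_comp_perm (hf : ∀ σ : Equiv.Perm (Fin n), ∀ x, f (x ∘ σ) = f x)
    (σ : Equiv.Perm (Fin n)) :
    ∫ x in {x | StrictMono (x ∘ σ)}, f x = ∫ x in {x : Fin n → ℝ | StrictMono x}, f x := by
  let T := MeasurableEquiv.arrowCongr' σ.symm (MeasurableEquiv.refl ℝ)
  have hT : ∀ x, T x = x ∘ σ := fun x => rfl
  have hmp : MeasurePreserving T := volume_preserving_arrowCongr' _ _ (.id volume)
  have := hmp.setIntegral_preimage_emb T.measurableEmbedding f {x | StrictMono x}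
  simpa only [hT, hf, Set.preimage_ofPred_eq] using this

theorem integral_eq_factorial_smul_setIntegral_strictMono (hint : Integrable f)
    (hf : ∀ σ : Equiv.Perm (Fin n), ∀ x, f (x ∘ σ) = f x) :
    ∫ x, f x = n ! • ∫ x in {x : Fin n → ℝ | StrictMono x}, f x := by
  let A (σ : Equiv.Perm (Fin n)) : Set (Fin n → ℝ) := {x | StrictMono (x ∘ σ)}
  have hA (σ : Equiv.Perm (Fin n)) : MeasurableSet (A σ) :=
    measurableSet_setOf_strictMono.preimage
      (measurable_pi_lambda _ fun j => measurable_pi_apply (σ j))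
  have hdisj :
      Set.Pairwise ↑(Finset.univ : Finset (Equiv.Perm (Fin n))) (Function.onFun Disjoint A) :=
    fun σ _ τ _ hne => Set.disjoint_left.2 fun x hσ hτ =>
      hne (Equiv.Perm.eq_of_strictMono_comp hσ hτ)
  have hcover : (⋃ σ ∈ Finset.univ, A σ) =ᵐ[volume] Set.univ := by
    refine ae_eq_univ.2 (measure_mono_null ?_ volume_setOf_not_injective)
    intro x hx hinj
    obtain ⟨σ, hσ⟩ := exists_strictMono_comp_perm hinj
    exact hx (Set.mem_biUnion (Finset.mem_coe.2 (Finset.mem_univ σ)) hσ)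
  rw [← setIntegral_univ, ← setIntegral_congr_set hcover,
    integral_biUnion_finset _ (fun σ _ => hA σ) hdisj (fun σ _ => hint.integrableOn)]
  simp [A, setIntegral_strictMono_comp_perm hf, Fintype.card_perm]

end Symmetric

theorem smul_setOf_strictMono {ι : Type*} [Preorder ι] {c : ℝ} (hc : 0 < c) :
    c • {x : ι → ℝ | StrictMono x} = {x | StrictMono x} := by
  ext x
  rw [Set.mem_smul_set_iff_inv_smul_mem₀ hc.ne']
  simp [StrictMono, mul_lt_mul_iff_of_pos_left (inv_pos.2 hc)]

theorem exp_neg_sum_sq_mul_vandermonde_sq_eq_det_mul_det {N : ℕ} (x : Fin N → ℝ) :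
    exp (-(∑ j, x j ^ 2) / 2) * vandermonde N x ^ 2 =
      (of fun i j : Fin N => aeval (x j) (hermite i)).det *
        (of fun i j : Fin N => exp (-(x j ^ 2 / 2)) * aeval (x j) (hermite i)).det := by
  have hrow := det_mul_row (fun j => exp (-(x j ^ 2 / 2)))
    (of fun i j : Fin N => aeval (x j) (hermite i))
  simp only [of_apply] at hrow
  rw [hrow, det_aeval_hermite, ← exp_sum, Finset.sum_neg_distrib, ← Finset.sum_div, neg_div]
  ring

theorem integrable_exp_neg_sum_sq_mul_vandermonde_sq (N : ℕ) :
    Integrable fun x : Fin N → ℝ => exp (-(∑ j, x j ^ 2) / 2) * vandermonde N x ^ 2 := by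
  simp_rw [exp_neg_sum_sq_mul_vandermonde_sq_eq_det_mul_det]
  exact integrable_det_mul_det fun a b => integrable_aeval_mul_gaussian_mul_aeval _ _

theorem integral_exp_neg_sum_sq_mul_vandermonde_sq (N : ℕ) :
    ∫ x : Fin N → ℝ, exp (-(∑ j, x j ^ 2) / 2) * vandermonde N x ^ 2 =
      N ! * ∏ k ∈ Finset.range N, (√(2 * π) * k !) := by
  have hgram : (of fun a b : Fin N =>
      ∫ y, aeval y (hermite a) * (exp (-(y ^ 2 / 2)) * aeval y (hermite b))) =
        diagonal fun a : Fin N => √(2 * π) * (a : ℕ)! := by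
    ext a b
    simp only [of_apply, integral_hermite_mul_gaussian_mul_hermite, diagonal_apply, Fin.val_inj]
  simp_rw [exp_neg_sum_sq_mul_vandermonde_sq_eq_det_mul_det]
  rw [volume_pi, integral_det_mul_det fun a b => integrable_aeval_mul_gaussian_mul_aeval _ _,
    hgram, det_diagonal, Fin.prod_univ_eq_prod_range (fun k => √(2 * π) * k !), Fintype.card_fin]

theorem setIntegral_strictMono_exp_neg_sum_sq_mul_vandermonde_sq (N : ℕ) :
    ∫ x in {x : Fin N → ℝ | StrictMono x}, exp (-(∑ j, x j ^ 2) / 2) * vandermonde N x ^ 2 =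
      ∏ k ∈ Finset.range N, (√(2 * π) * k !) := by
  have hsymm (σ : Equiv.Perm (Fin N)) (x : Fin N → ℝ) :
      exp (-(∑ j, (x ∘ σ) j ^ 2) / 2) * vandermonde N (x ∘ σ) ^ 2 =
        exp (-(∑ j, x j ^ 2) / 2) * vandermonde N x ^ 2 := by
    rw [vandermonde_comp_perm, mul_pow, ← Int.cast_pow, ← Units.val_pow_eq_pow_val, Int.units_sq]
    simp [Equiv.sum_comp σ (fun j => x j ^ 2)]
  have h := integral_eq_factorial_smul_setIntegral_strictMono
    (integrable_exp_neg_sum_sq_mul_vandermonde_sq N) hsymm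
  rw [integral_exp_neg_sum_sq_mul_vandermonde_sq, nsmul_eq_mul] at h
  exact (mul_left_cancel₀ (by positivity) h).symm

theorem prod_range_sqrt_two_pi_mul_factorial (N : ℕ) :
    ∏ k ∈ Finset.range N, (√(2 * π) * k !) =
      (2 * π) ^ ((N : ℝ) / 2) * ∏ k ∈ Finset.range N, Gamma (k + 1) := by
  rw [Finset.prod_mul_distrib, Finset.prod_const, Finset.card_range,
    sqrt_pow_eq_rpow_div_two (by positivity)]
  simp_rw [Gamma_nat_eq_factorial]

/-- Selberg-type Gaussian integral over the Weyl chamber with squared Vandermonde. -/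
theorem gaussian_vandermonde_sq_integral (N : ℕ) (t : ℝ) (ht : 0 < t) :
    ∫ x in {x : Fin N → ℝ | StrictMono x},
        Real.exp (-(∑ j, x j ^ 2) / (2 * t)) * (vandermonde N x) ^ 2 =
      ((2 * π) ^ ((N : ℝ) / 2) * ∏ j ∈ Finset.range N, Real.Gamma (j + 1)) *
        t ^ (((N : ℝ) ^ 2) / 2) := by
  have hc : 0 < √t := sqrt_pos.2 ht
  have hscale (y : Fin N → ℝ) :
      exp (-(∑ j, (√t • y) j ^ 2) / (2 * t)) * vandermonde N (√t • y) ^ 2 =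
        √t ^ (2 * N.choose 2) * (exp (-(∑ j, y j ^ 2) / 2) * vandermonde N y ^ 2) := by
    simp only [vandermonde_smul, Pi.smul_apply, smul_eq_mul, mul_pow, sq_sqrt ht.le,
      ← Finset.mul_sum]
    field_simp
    rw [← pow_mul', pow_mul, sq_sqrt ht.le, mul_comm]
  have hsub := Measure.setIntegral_comp_smul_of_pos volume
    (fun x : Fin N → ℝ => exp (-(∑ j, x j ^ 2) / (2 * t)) * vandermonde N x ^ 2)
    {x | StrictMono x} hc
  rw [smul_setOf_strictMono hc, Module.finrank_fin_fun, smul_eq_mul] at hsub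
  simp only [hscale, integral_const_mul,
    setIntegral_strictMono_exp_neg_sum_sq_mul_vandermonde_sq] at hsub
  rw [eq_inv_mul_iff_mul_eq₀ (pow_pos hc N).ne', ← mul_assoc, ← pow_add,
    Nat.add_two_mul_choose_two, sqrt_pow_eq_rpow_div_two ht.le,
    prod_range_sqrt_two_pi_mul_factorial] at hsub
  rw [← hsub]
  push_cast
  ring
end
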